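/- arXiv:1810.00698 — 6 statements merged into one kernel-verified Lean document; each statement's English description precedes it below -/
import Mathlib

section
/- Let ρ be a density matrix on ℂ^d, let {P_n}_{n∈F} be a finite family of positive semidefinite d×d matrices satisfying ∑_n P_n² = 1, let p_n = tr(P_n ρ P_n), and for each n with p_n > 0 let ρ⁽ⁿ⁾ = P_n ρ P_n / p_n. Then S(ρ) ≤ H(p) + ∑_{n : p_n > 0} p_n S(ρ⁽ⁿ⁾), i.e., the von Neumann entropy of the pre-measurement state is bounded by the Shannon entropy of the outcome distribution plus the average von Neumann entropy of the post-measurement states. (Lemma 4.1 of the paper.) -/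
/-
Diagonalise `ρ = U diag(λ) Uᴴ` and each `P n * ρ * P n = V n diag(μ n) (V n)ᴴ`. With
`M n = Uᴴ P n V n` one gets `μ n k = ∑ j |M n j k|² λ j`; the weights `|M n j k|²` sum to `1`
over `(n, k)` because `∑ P n ^ 2 = 1`, and to at most `1` over `j` because `P n ^ 2 ≤ 1`.
Concavity of `η(x) = -x log x` together with `η 0 = 0` then gives `S(ρ) ≤ ∑ n S(P n ρ P n)` for
the unnormalised states, and `S(P n ρ P n) = η(p n) + p n S(ρ⁽ⁿ⁾)` is the scaling law of the
entropy.
-/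

open Matrix
open scoped BigOperators Classical ComplexOrder

/-- Von Neumann entropy of a matrix: `-∑ λᵢ log λᵢ` over its eigenvalues if it is
Hermitian, and `0` otherwise (junk value). -/
noncomputable def vnEntropy {n : Type*} [Fintype n] [DecidableEq n]
    (A : Matrix n n ℂ) : ℝ :=
  if hA : A.IsHermitian then ∑ i, Real.negMulLog (hA.eigenvalues i) else 0

/-- Shannon entropy of a (probability) vector. -/
noncomputable def shannonEntropy {F : Type*} [Fintype F] (p : F → ℝ) : ℝ :=
  ∑ n, Real.negMulLog (p n)

namespace Matrix

variable {ι κ : Type*} [Fintype ι]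

lemma IsHermitian.conjTranspose_eigenvectorUnitary_mul_mul [DecidableEq ι] {𝕜 : Type*}
    [RCLike 𝕜] {A : Matrix ι ι 𝕜} (hA : A.IsHermitian) :
    (hA.eigenvectorUnitary : Matrix ι ι 𝕜)ᴴ * A * (hA.eigenvectorUnitary : Matrix ι ι 𝕜)
      = diagonal (RCLike.ofReal ∘ hA.eigenvalues) := by
  have h := hA.conjStarAlgAut_star_eigenvectorUnitary
  rwa [Unitary.conjStarAlgAut_star_apply] at h

lemma IsHermitian.sum_comp_eigenvalues_eq_of_conjTranspose_mul_mul_eq_diagonal [DecidableEq ι]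
    {𝕜 : Type*} [RCLike 𝕜] {A U : Matrix ι ι 𝕜} (hA : A.IsHermitian) (hU : U ∈ unitaryGroup ι 𝕜)
    {μ : ι → ℝ} (hμ : Uᴴ * A * U = diagonal (RCLike.ofReal ∘ μ)) (f : ℝ → ℝ) :
    ∑ i, f (hA.eigenvalues i) = ∑ i, f (μ i) := by
  have hUU : U * Uᴴ = 1 := mem_unitaryGroup_iff.mp hU
  have hchar : A.charpoly = (diagonal (RCLike.ofReal ∘ μ : ι → 𝕜)).charpoly := by
    rw [← hμ, Matrix.mul_assoc, charpoly_mul_comm, Matrix.mul_assoc, hUU, Matrix.mul_one]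
  have hroots : Finset.univ.val.map (RCLike.ofReal ∘ hA.eigenvalues)
      = Finset.univ.val.map (RCLike.ofReal ∘ μ : ι → 𝕜) := by
    rw [← hA.roots_charpoly_eq_eigenvalues, hchar, charpoly_diagonal,
      Polynomial.roots_prod _ _ (by simp [Finset.prod_ne_zero_iff, Polynomial.X_sub_C_ne_zero])]
    simp
  simpa [Multiset.map_map, Function.comp_def] using
    congrArg (fun s => (s.map (f ∘ RCLike.re)).sum) hroots

lemma PosSemidef.mul_mul_of_isHermitian {R : Type*} [CommRing R] [PartialOrder R] [StarRing R]
    {A B : Matrix ι ι R} (hA : A.PosSemidef) (hB : B.IsHermitian) : (B * A * B).PosSemidef := by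
  simpa [hB.eq] using hA.mul_mul_conjTranspose_same B

lemma mul_conjTranspose_mul_of_mem_unitaryGroup [DecidableEq ι] {R : Type*} [CommRing R]
    [StarRing R] {U : Matrix ι ι R} (hU : U ∈ unitaryGroup ι R) (X : Matrix ι κ R) :
    U * (Uᴴ * X) = X := by
  rw [← Matrix.mul_assoc, show U * Uᴴ = 1 from mem_unitaryGroup_iff.mp hU, Matrix.one_mul]

lemma conjTranspose_mul_diagonal_mul_apply_self [DecidableEq ι] (M : Matrix ι κ ℂ) (x : ι → ℝ)
    (k : κ) :
    (Mᴴ * diagonal (RCLike.ofReal ∘ x : ι → ℂ) * M) k k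
      = ((∑ j, Complex.normSq (M j k) * x j : ℝ) : ℂ) := by
  rw [mul_apply]
  simp only [mul_diagonal, conjTranspose_apply]
  push_cast
  refine Finset.sum_congr rfl fun j _ => ?_
  rw [← Complex.mul_conj, Complex.star_def]
  simp only [Complex.coe_algebraMap, Function.comp_apply]
  ring

lemma eq_sum_normSq_mul_of_conjTranspose_mul_mul_eq_diagonal [DecidableEq ι]
    {ρ B U V : Matrix ι ι ℂ} (hU : U ∈ unitaryGroup ι ℂ) {ev μ : ι → ℝ}
    (hρ : Uᴴ * ρ * U = diagonal (RCLike.ofReal ∘ ev))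
    (hBρB : Vᴴ * (Bᴴ * ρ * B) * V = diagonal (RCLike.ofReal ∘ μ)) (k : ι) :
    μ k = ∑ j, Complex.normSq ((Uᴴ * B * V) j k) * ev j := by
  have hdiag : (Uᴴ * B * V)ᴴ * diagonal (RCLike.ofReal ∘ ev) * (Uᴴ * B * V)
      = diagonal (RCLike.ofReal ∘ μ) := by
    rw [← hρ, ← hBρB]
    simp only [conjTranspose_mul, conjTranspose_conjTranspose, Matrix.mul_assoc,
      mul_conjTranspose_mul_of_mem_unitaryGroup hU]
  have h := conjTranspose_mul_diagonal_mul_apply_self (Uᴴ * B * V) ev k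
  rw [hdiag, diagonal_apply_eq, Function.comp_apply] at h
  exact Complex.ofReal_injective h

lemma mul_conjTranspose_apply_self (M : Matrix κ ι ℂ) (j : κ) :
    (M * Mᴴ) j j = ((∑ k, Complex.normSq (M j k) : ℝ) : ℂ) := by
  rw [mul_apply]
  push_cast
  refine Finset.sum_congr rfl fun k _ => ?_
  rw [conjTranspose_apply, ← Complex.mul_conj, Complex.star_def]

lemma sum_sum_normSq_apply_eq_one [DecidableEq κ] {F : Type*} [Fintype F]
    {N : F → Matrix κ ι ℂ} (hN : ∑ n, N n * (N n)ᴴ = 1) (j : κ) :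
    ∑ n, ∑ k, Complex.normSq (N n j k) = 1 := by
  have h := congrFun (congrFun hN j) j
  simp only [Matrix.sum_apply, mul_conjTranspose_apply_self, one_apply_eq] at h
  exact_mod_cast h

lemma sum_normSq_apply_le_one [DecidableEq κ] {F : Type*} [Fintype F]
    {N : F → Matrix κ ι ℂ} (hN : ∑ n, N n * (N n)ᴴ = 1) (n : F) (j : κ) :
    ∑ k, Complex.normSq (N n j k) ≤ 1 :=
  (sum_sum_normSq_apply_eq_one hN j).symm ▸ Finset.single_le_sum
    (fun m _ => Finset.sum_nonneg fun k _ => Complex.normSq_nonneg (N m j k)) (Finset.mem_univ n)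

lemma sum_mul_mul_mul_conjTranspose_eq_one [DecidableEq ι] {R : Type*} [CommRing R] [StarRing R]
    {F : Type*} [Fintype F] {P : F → Matrix ι ι R} (hP : ∀ n, (P n).IsHermitian)
    (hPsum : ∑ n, P n ^ 2 = 1) {U : Matrix ι ι R} (hU : U ∈ unitaryGroup ι R)
    {W : F → Matrix ι ι R} (hW : ∀ n, W n ∈ unitaryGroup ι R) :
    ∑ n, Uᴴ * P n * W n * (Uᴴ * P n * W n)ᴴ = 1 := by
  have hterm : ∀ n, Uᴴ * P n * W n * (Uᴴ * P n * W n)ᴴ = Uᴴ * (P n ^ 2 * U) := fun n => by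
    simp only [conjTranspose_mul, conjTranspose_conjTranspose, (hP n).eq, Matrix.mul_assoc,
      mul_conjTranspose_mul_of_mem_unitaryGroup (hW n), sq]
  simp only [hterm, ← Finset.mul_sum, ← Finset.sum_mul, hPsum, Matrix.one_mul]
  exact mem_unitaryGroup_iff'.mp hU

end Matrix

lemma Real.sum_mul_negMulLog_le_negMulLog_sum {ι : Type*} [Fintype ι] (w x : ι → ℝ)
    (hw : ∀ i, 0 ≤ w i) (hw1 : ∑ i, w i ≤ 1) (hx : ∀ i, 0 ≤ x i) :
    ∑ i, w i * Real.negMulLog (x i) ≤ Real.negMulLog (∑ i, w i * x i) := by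
  simpa using Real.concaveOn_negMulLog.map_add_sum_le (t := Finset.univ) (w := w) (p := x)
    (v := 1 - ∑ i, w i) (q := 0) (fun i _ => hw i) (by ring) (fun i _ => hx i) (by linarith)
    (Set.mem_Ici.2 le_rfl)

lemma sum_negMulLog_le_sum_negMulLog_mulVec {ι κ : Type*} [Fintype ι] [Fintype κ]
    {D : Matrix κ ι ℝ} (hD : ∀ k j, 0 ≤ D k j) (hcol : ∀ j, ∑ k, D k j = 1)
    (hrow : ∀ k, ∑ j, D k j ≤ 1) {x : ι → ℝ} (hx : ∀ j, 0 ≤ x j) :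
    ∑ j, Real.negMulLog (x j) ≤ ∑ k, Real.negMulLog ((D *ᵥ x) k) :=
  calc ∑ j, Real.negMulLog (x j) = ∑ k, ∑ j, D k j * Real.negMulLog (x j) := by
        simp only [Finset.sum_comm (γ := κ), ← Finset.sum_mul, hcol, one_mul]
    _ ≤ ∑ k, Real.negMulLog ((D *ᵥ x) k) := Finset.sum_le_sum fun k _ =>
        Real.sum_mul_negMulLog_le_negMulLog_sum _ _ (hD k) (hrow k) hx

section vnEntropy

variable {ι : Type*} [Fintype ι] [DecidableEq ι]

lemma vnEntropy_eq_sum_negMulLog_of_conjTranspose_mul_mul_eq_diagonal {A U : Matrix ι ι ℂ}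
    (hA : A.IsHermitian) (hU : U ∈ unitaryGroup ι ℂ) {μ : ι → ℝ}
    (hμ : Uᴴ * A * U = diagonal (RCLike.ofReal ∘ μ)) :
    vnEntropy A = ∑ i, Real.negMulLog (μ i) := by
  rw [vnEntropy, dif_pos hA,
    hA.sum_comp_eigenvalues_eq_of_conjTranspose_mul_mul_eq_diagonal hU hμ]

@[simp]
lemma vnEntropy_zero : vnEntropy (0 : Matrix ι ι ℂ) = 0 := by
  have h0 : (0 : Matrix ι ι ℂ).IsHermitian := isHermitian_zero
  rw [vnEntropy, dif_pos h0, (h0.eigenvalues_eq_zero_iff).2 rfl]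
  simp

lemma vnEntropy_real_smul {A : Matrix ι ι ℂ} (hA : A.IsHermitian) (htr : A.trace = 1) (c : ℝ) :
    vnEntropy (c • A) = Real.negMulLog c + c * vnEntropy A := by
  have hsum : ∑ i, hA.eigenvalues i = 1 := by
    have h := hA.trace_eq_sum_eigenvalues
    rw [htr, ← RCLike.ofReal_sum, ← RCLike.ofReal_one, RCLike.ofReal_inj] at h
    exact h.symm
  have hdiag : (hA.eigenvectorUnitary : Matrix ι ι ℂ)ᴴ * (c • A)
      * (hA.eigenvectorUnitary : Matrix ι ι ℂ)
      = diagonal (RCLike.ofReal ∘ (c • hA.eigenvalues)) := by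
    rw [Matrix.mul_smul, Matrix.smul_mul, hA.conjTranspose_eigenvectorUnitary_mul_mul]
    ext i j
    by_cases hij : i = j <;> simp [hij, Complex.real_smul]
  rw [vnEntropy_eq_sum_negMulLog_of_conjTranspose_mul_mul_eq_diagonal
    (hA.smul (IsSelfAdjoint.all c)) hA.eigenvectorUnitary.2 hdiag, vnEntropy, dif_pos hA]
  simp only [Pi.smul_apply, smul_eq_mul, Real.negMulLog_mul, Finset.sum_add_distrib,
    ← Finset.sum_mul, ← Finset.mul_sum, hsum, one_mul]

lemma vnEntropy_eq_negMulLog_add_mul_vnEntropy_inv_smul {A : Matrix ι ι ℂ} (hA : A.PosSemidef)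
    {t : ℝ} (htr : A.trace = t) :
    vnEntropy A = Real.negMulLog t + t * vnEntropy (t⁻¹ • A) := by
  rcases eq_or_ne t 0 with rfl | ht
  · rw [(hA.trace_eq_zero_iff).1 (by exact_mod_cast htr)]
    simp
  · have hunit : (t⁻¹ • A).trace = 1 := by
      rw [trace_smul, htr, Complex.real_smul]
      push_cast
      exact inv_mul_cancel₀ (by exact_mod_cast ht)
    conv_lhs => rw [← smul_inv_smul₀ ht A]
    exact vnEntropy_real_smul (hA.1.smul (IsSelfAdjoint.all _)) hunit t

theorem vnEntropy_le_sum_vnEntropy_mul_mul {F : Type*} [Fintype F] {ρ : Matrix ι ι ℂ}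
    (hρ : ρ.PosSemidef) {P : F → Matrix ι ι ℂ} (hP : ∀ n, (P n).IsHermitian)
    (hPsum : ∑ n, P n ^ 2 = 1) :
    vnEntropy ρ ≤ ∑ n, vnEntropy (P n * ρ * P n) := by
  have hQ : ∀ n, (P n * ρ * P n).IsHermitian := fun n => (hρ.mul_mul_of_isHermitian (hP n)).1
  set ev := hρ.1.eigenvalues
  set μ := fun n => (hQ n).eigenvalues
  set U : Matrix ι ι ℂ := (hρ.1.eigenvectorUnitary : Matrix ι ι ℂ)
  set V : F → Matrix ι ι ℂ := fun n => ((hQ n).eigenvectorUnitary : Matrix ι ι ℂ)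
  have hU : U ∈ unitaryGroup ι ℂ := hρ.1.eigenvectorUnitary.2
  have hV : ∀ n, V n ∈ unitaryGroup ι ℂ := fun n => (hQ n).eigenvectorUnitary.2
  set M : F → Matrix ι ι ℂ := fun n => Uᴴ * P n * V n
  have hμ : ∀ n k, μ n k = ∑ j, Complex.normSq (M n j k) * ev j := fun n k =>
    eq_sum_normSq_mul_of_conjTranspose_mul_mul_eq_diagonal hU
      hρ.1.conjTranspose_eigenvectorUnitary_mul_mul
      (by rw [(hP n).eq]; exact (hQ n).conjTranspose_eigenvectorUnitary_mul_mul) k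
  set D : Matrix (F × ι) ι ℝ := fun nk j => Complex.normSq (M nk.1 j nk.2)
  have hcol : ∀ j, ∑ nk, D nk j = 1 := fun j => by
    rw [Fintype.sum_prod_type]
    exact sum_sum_normSq_apply_eq_one (sum_mul_mul_mul_conjTranspose_eq_one hP hPsum hU hV) j
  have hrow : ∀ nk, ∑ j, D nk j ≤ 1 := fun ⟨n, k⟩ => by
    have h := sum_normSq_apply_le_one
      (sum_mul_mul_mul_conjTranspose_eq_one hP hPsum (hV n) fun _ => hU) n k
    have hM : (V n)ᴴ * P n * U = (M n)ᴴ := by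
      simp [M, conjTranspose_mul, (hP n).eq, Matrix.mul_assoc]
    simpa [hM, Complex.normSq_conj] using h
  calc vnEntropy ρ = ∑ j, Real.negMulLog (ev j) := by rw [vnEntropy, dif_pos hρ.1]
    _ ≤ ∑ nk, Real.negMulLog ((D *ᵥ ev) nk) := sum_negMulLog_le_sum_negMulLog_mulVec
        (fun _ _ => Complex.normSq_nonneg _) hcol hrow hρ.eigenvalues_nonneg
    _ = ∑ n, ∑ k, Real.negMulLog (μ n k) := by
        simp only [Fintype.sum_prod_type, hμ]
        rfl
    _ = ∑ n, vnEntropy (P n * ρ * P n) :=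
        Finset.sum_congr rfl fun n _ => by rw [vnEntropy, dif_pos (hQ n)]

end vnEntropy

theorem vnEntropy_le_shannon_add_avg_post_measurement_general
    {d : ℕ} {F : Type*} [Fintype F]
    (ρ : Matrix (Fin d) (Fin d) ℂ) (hρ : ρ.PosSemidef)
    (P : F → Matrix (Fin d) (Fin d) ℂ) (hP : ∀ n, (P n).PosSemidef)
    (hPsum : ∑ n, (P n) ^ 2 = 1)
    (p : F → ℝ) (hp : ∀ n, (p n : ℂ) = (P n * ρ * P n).trace) :
    vnEntropy ρ ≤ shannonEntropy p +
      ∑ n ∈ Finset.univ.filter (fun n => 0 < p n),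
        p n * vnEntropy ((p n)⁻¹ • (P n * ρ * P n)) := by
  have hQ : ∀ n, (P n * ρ * P n).PosSemidef := fun n => hρ.mul_mul_of_isHermitian (hP n).1
  have hp_nonneg : ∀ n, 0 ≤ p n := fun n => by
    exact_mod_cast (hp n).symm ▸ (hQ n).trace_nonneg
  calc vnEntropy ρ ≤ ∑ n, vnEntropy (P n * ρ * P n) :=
        vnEntropy_le_sum_vnEntropy_mul_mul hρ (fun n => (hP n).1) hPsum
    _ = ∑ n, (Real.negMulLog (p n) + p n * vnEntropy ((p n)⁻¹ • (P n * ρ * P n))) :=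
        Finset.sum_congr rfl fun n _ =>
          vnEntropy_eq_negMulLog_add_mul_vnEntropy_inv_smul (hQ n) (hp n).symm
    _ = _ := by
        rw [Finset.sum_add_distrib, shannonEntropy, Finset.sum_filter_of_ne]
        intro n _ hn
        exact (hp_nonneg n).lt_of_ne' (left_ne_zero_of_mul hn)

/-- Lemma 4.1: the entropy of the pre-measurement state is bounded by the Shannon
entropy of the outcome distribution plus the average post-measurement entropy. -/
theorem vnEntropy_le_shannon_add_avg_post_measurement
    {d : ℕ} {F : Type*} [Fintype F]
    (ρ : Matrix (Fin d) (Fin d) ℂ) (hρ : ρ.PosSemidef) (hρtr : ρ.trace = 1)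
    (P : F → Matrix (Fin d) (Fin d) ℂ) (hP : ∀ n, (P n).PosSemidef)
    (hPsum : ∑ n, (P n) ^ 2 = 1)
    (p : F → ℝ) (hp : ∀ n, (p n : ℂ) = (P n * ρ * P n).trace) :
    vnEntropy ρ ≤ shannonEntropy p +
      ∑ n ∈ Finset.univ.filter (fun n => 0 < p n),
        p n * vnEntropy ((p n)⁻¹ • (P n * ρ * P n)) :=
  vnEntropy_le_shannon_add_avg_post_measurement_general ρ hρ P hP hPsum p hp
end

section
/- Let ρ be a density matrix on ℂ^d and let {P_n}_{n∈F} be a finite family of positive semidefinite d×d matrices satisfying ∑_n P_n² = 1. Then S(ρ) ≤ S(∑_n P_n ρ P_n), i.e., the von Neumann entropy of the ensemble-averaged post-measurement state is at least that of the pre-measurement state. -/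
open Matrix
open scoped BigOperators Classical ComplexOrder

/-!
Diagonalize `ρ = U diag(p) U*` and `σ = ∑ₙ Pₙ ρ Pₙ = V diag(q) V*`. Comparing diagonal entries
of `V* σ V` gives `q = D p` with `D j i = ∑ₙ |(V* Pₙ U) j i|²`. The completeness relation
`∑ₙ Pₙ² = 1`, conjugated by the unitaries, says that the row sums and the column sums of `D`
are `1`, so `D` is doubly stochastic. Jensen's inequality for the concave function `-x log x`
along each row of `D`, summed over the rows, then gives `S(ρ) ≤ S(σ)`.
-/

theorem ConcaveOn.sum_le_sum_mulVec_of_mem_doublyStochastic {n : Type*} [Fintype n]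
    [DecidableEq n] {s : Set ℝ} {f : ℝ → ℝ} (hf : ConcaveOn ℝ s f) {D : Matrix n n ℝ}
    (hD : D ∈ doublyStochastic ℝ n) {p : n → ℝ} (hp : ∀ i, p i ∈ s) :
    ∑ i, f (p i) ≤ ∑ j, f ((D *ᵥ p) j) :=
  calc ∑ i, f (p i) = ∑ j, ∑ i, D j i • f (p i) := by
        rw [Finset.sum_comm]
        simp_rw [smul_eq_mul, ← Finset.sum_mul, sum_col_of_mem_doublyStochastic hD, one_mul]
    _ ≤ ∑ j, f (∑ i, D j i • p i) := Finset.sum_le_sum fun j _ =>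
        hf.le_map_sum (fun _ _ => nonneg_of_mem_doublyStochastic hD)
          (sum_row_of_mem_doublyStochastic hD j) fun i _ => hp i
    _ = ∑ j, f ((D *ᵥ p) j) := rfl

theorem Unitary.sum_conj_mul_star_conj_eq_one {F R : Type*} [Fintype F] [Ring R] [StarRing R]
    {K : F → R} (hK : ∑ k, K k * star (K k) = 1) {u v : R} (hu : u ∈ unitary R)
    (hv : v ∈ unitary R) :
    ∑ k, (star v * K k * u) * star (star v * K k * u) = 1 := by
  have hconj : ∀ k, (star v * K k * u) * star (star v * K k * u) =
      star v * (K k * star (K k)) * v := fun k => by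
    simp only [star_mul, star_star, mul_assoc]
    rw [← mul_assoc u, Unitary.mul_star_self_of_mem hu, one_mul]
  simp only [hconj, ← Finset.mul_sum, ← Finset.sum_mul, hK, mul_one,
    Unitary.star_mul_self_of_mem hv]

namespace Matrix

variable {m n F : Type*} [Fintype F]

/-- For `B k = V* Kₖ U` with unitaries `U`, `V`, the entries are the transition weights
`∑ₖ |⟨vⱼ, Kₖ uᵢ⟩|²` between the columns of `U` and those of `V`. -/
noncomputable def sumNormSqEntries (B : F → Matrix m n ℂ) : Matrix m n ℝ :=
  of fun j i => ∑ k, Complex.normSq (B k j i)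

theorem sumNormSqEntries_conjTranspose (B : F → Matrix n m ℂ) :
    sumNormSqEntries (fun k => (B k)ᴴ) = (sumNormSqEntries B)ᵀ := by
  ext i j
  simp [sumNormSqEntries]

theorem sum_mul_diagonal_mul_conjTranspose_apply_self [Fintype n] [DecidableEq n]
    (B : F → Matrix m n ℂ) (p : n → ℝ) (j : m) :
    (∑ k, B k * diagonal (RCLike.ofReal ∘ p : n → ℂ) * (B k)ᴴ : Matrix m m ℂ) j j =
      (sumNormSqEntries B *ᵥ p) j := by
  simp only [sum_apply, mul_apply, diagonal_apply, mul_ite, mul_zero, Finset.sum_ite_eq',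
    Finset.mem_univ, if_true, conjTranspose_apply, Function.comp_apply, sumNormSqEntries, mulVec,
    dotProduct, of_apply, Finset.sum_mul, Complex.ofReal_sum, Complex.ofReal_mul,
    ← Complex.mul_conj]
  rw [Finset.sum_comm]
  exact Finset.sum_congr rfl fun _ _ => Finset.sum_congr rfl fun _ _ => mul_right_comm _ _ _

theorem sumNormSqEntries_mulVec_one [Fintype n] [DecidableEq m] [DecidableEq n]
    {B : F → Matrix m n ℂ} (hB : ∑ k, B k * (B k)ᴴ = 1) : sumNormSqEntries B *ᵥ 1 = 1 := by
  ext j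
  have h := sum_mul_diagonal_mul_conjTranspose_apply_self B 1 j
  simp only [Complex.coe_algebraMap, Pi.comp_one, Complex.ofReal_one, Function.const_one,
    diagonal_one', Matrix.mul_one, hB, one_apply_eq] at h
  exact_mod_cast h.symm

theorem sumNormSqEntries_mem_doublyStochastic [Fintype n] [DecidableEq n]
    {B : F → Matrix n n ℂ} (hB : ∑ k, B k * (B k)ᴴ = 1) (hB' : ∑ k, (B k)ᴴ * B k = 1) :
    sumNormSqEntries B ∈ doublyStochastic ℝ n := by
  refine ⟨fun _ _ => Finset.sum_nonneg fun _ _ => Complex.normSq_nonneg _,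
    sumNormSqEntries_mulVec_one hB, ?_⟩
  rw [← mulVec_transpose, ← sumNormSqEntries_conjTranspose]
  exact sumNormSqEntries_mulVec_one (by simpa only [conjTranspose_conjTranspose] using hB')

theorem IsHermitian.eigenvalues_sum_mul_mul_conjTranspose [Fintype n] [DecidableEq n]
    {A : Matrix n n ℂ} (hA : A.IsHermitian) (K : F → Matrix n n ℂ)
    (hσ : (∑ k, K k * A * (K k)ᴴ).IsHermitian) :
    hσ.eigenvalues = sumNormSqEntries (fun k => star (hσ.eigenvectorUnitary : Matrix n n ℂ) *
      K k * (hA.eigenvectorUnitary : Matrix n n ℂ)) *ᵥ hA.eigenvalues := by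
  set U : Matrix n n ℂ := ↑hA.eigenvectorUnitary
  set V : Matrix n n ℂ := ↑hσ.eigenvectorUnitary
  have hA_eq : A = U * diagonal (RCLike.ofReal ∘ hA.eigenvalues) * star U := by
    simpa using hA.spectral_theorem
  have hσ_diag : star V * (∑ k, K k * A * (K k)ᴴ) * V =
      diagonal (RCLike.ofReal ∘ hσ.eigenvalues) := by
    have h := hσ.conjStarAlgAut_star_eigenvectorUnitary
    rwa [Unitary.conjStarAlgAut_star_apply] at h
  have hσ_conj : star V * (∑ k, K k * A * (K k)ᴴ) * V = ∑ k, (star V * K k * U) *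
      diagonal (RCLike.ofReal ∘ hA.eigenvalues) * (star V * K k * U)ᴴ := by
    simp only [Finset.mul_sum, Finset.sum_mul, ← star_eq_conjTranspose, star_mul, star_star, hA_eq,
      Matrix.mul_assoc]
  ext j
  apply Complex.ofReal_injective
  rw [← sum_mul_diagonal_mul_conjTranspose_apply_self, ← hσ_conj, hσ_diag]
  simp

end Matrix

theorem vnEntropy_le_vnEntropy_sum_mul_mul_conjTranspose {n F : Type*} [Fintype n]
    [DecidableEq n] [Fintype F] {A : Matrix n n ℂ} (hA : A.PosSemidef) {K : F → Matrix n n ℂ}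
    (hK : ∑ k, K k * (K k)ᴴ = 1) (hK' : ∑ k, (K k)ᴴ * K k = 1) :
    vnEntropy A ≤ vnEntropy (∑ k, K k * A * (K k)ᴴ) := by
  have hσ : (∑ k, K k * A * (K k)ᴴ).IsHermitian :=
    isSelfAdjoint_sum _ fun k _ => hA.1.isSelfAdjoint.conjugate (K k)
  rw [vnEntropy, vnEntropy, dif_pos hA.1, dif_pos hσ,
    hA.1.eigenvalues_sum_mul_mul_conjTranspose K hσ]
  refine Real.concaveOn_negMulLog.sum_le_sum_mulVec_of_mem_doublyStochastic
    (sumNormSqEntries_mem_doublyStochastic ?_ ?_) hA.eigenvalues_nonneg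
  · exact Unitary.sum_conj_mul_star_conj_eq_one hK hA.1.eigenvectorUnitary.2
      hσ.eigenvectorUnitary.2
  -- the same identity for the adjoint family `star ∘ K`, with the two unitaries swapped
  · simpa only [star_mul, star_star, ← star_eq_conjTranspose, Matrix.mul_assoc] using
      Unitary.sum_conj_mul_star_conj_eq_one (K := fun k => star (K k))
        (by simpa only [star_eq_conjTranspose, conjTranspose_conjTranspose] using hK')
        hσ.eigenvectorUnitary.2 hA.1.eigenvectorUnitary.2

theorem vnEntropy_le_vnEntropy_sum_measurement_general
    {d : ℕ} {F : Type*} [Fintype F]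
    (ρ : Matrix (Fin d) (Fin d) ℂ) (hρ : ρ.PosSemidef)
    (P : F → Matrix (Fin d) (Fin d) ℂ) (hP : ∀ n, (P n).PosSemidef)
    (hPsum : ∑ n, (P n) ^ 2 = 1) :
    vnEntropy ρ ≤ vnEntropy (∑ n, P n * ρ * P n) := by
  have hPh : ∀ n, (P n)ᴴ = P n := fun n => (hP n).1
  have hK : ∑ n, P n * (P n)ᴴ = 1 := by simpa only [hPh, sq] using hPsum
  have hK' : ∑ n, (P n)ᴴ * P n = 1 := by simpa only [hPh, sq] using hPsum
  simpa only [hPh] using vnEntropy_le_vnEntropy_sum_mul_mul_conjTranspose hρ hK hK'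

/-- The entropy of the ensemble-averaged post-measurement state is at least the
entropy of the pre-measurement state. -/
theorem vnEntropy_le_vnEntropy_sum_measurement
    {d : ℕ} {F : Type*} [Fintype F]
    (ρ : Matrix (Fin d) (Fin d) ℂ) (hρ : ρ.PosSemidef) (hρtr : ρ.trace = 1)
    (P : F → Matrix (Fin d) (Fin d) ℂ) (hP : ∀ n, (P n).PosSemidef)
    (hPsum : ∑ n, (P n) ^ 2 = 1) :
    vnEntropy ρ ≤ vnEntropy (∑ n, P n * ρ * P n) :=
  vnEntropy_le_vnEntropy_sum_measurement_general ρ hρ P hP hPsum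
end

section
/- Let p = (p_n)_{n∈F} be a probability vector indexed by a finite set F and let (ρ_n)_{n∈F} be a family of density matrices on ℂ^d. Then S(∑_n p_n ρ_n) ≤ H(p) + ∑_n p_n S(ρ_n), i.e., the von Neumann entropy of a mixture is at most the Shannon entropy of the mixing distribution plus the average von Neumann entropy of the components. -/
open Matrix
open scoped BigOperators Classical ComplexOrder

/-!
Write the mixture as `V * Vᴴ`, where the columns of `V` are the eigenvectors of the `ρ n`
scaled by `√(p n * λₙⱼ)`. Then `Vᴴ * V` has the same nonzero eigenvalues as `V * Vᴴ` and
diagonal entries `p n * λₙⱼ`. By Schur, the diagonal of a Hermitian matrix is a doubly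
stochastic average of its eigenvalues, so concavity of `negMulLog` bounds the entropy by the
Shannon entropy of the joint distribution `p n * λₙⱼ`, which the chain rule splits as
`H(p) + ∑ p n * S(ρ n)`.
-/

lemma vnEntropy_eq_shannonEntropy {n : Type*} [Fintype n] [DecidableEq n] {A : Matrix n n ℂ}
    (hA : A.IsHermitian) : vnEntropy A = shannonEntropy hA.eigenvalues :=
  dif_pos hA

lemma shannonEntropy_joint_eq_add {F ι : Type*} [Fintype F] [Fintype ι] (p : F → ℝ)
    (q : F → ι → ℝ) (hq : ∀ n, ∑ j, q n j = 1) :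
    shannonEntropy (fun x : F × ι => p x.1 * q x.1 x.2) =
      shannonEntropy p + ∑ n, p n * shannonEntropy (q n) := by
  simp only [shannonEntropy, Fintype.sum_prod_type, Real.negMulLog_mul, Finset.sum_add_distrib,
    ← Finset.sum_mul, ← Finset.mul_sum, hq, one_mul]

namespace Matrix

section FromColBlocks

variable {ι m k α : Type*}

def fromColBlocks (W : ι → Matrix m k α) : Matrix m (ι × k) α :=
  of fun i x => W x.1 i x.2

variable [NonUnitalNonAssocSemiring α] [StarRing α]

lemma fromColBlocks_mul_conjTranspose [Fintype ι] [Fintype k] (W : ι → Matrix m k α) :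
    fromColBlocks W * (fromColBlocks W)ᴴ = ∑ n, W n * (W n)ᴴ := by
  ext i i'
  simp [fromColBlocks, mul_apply, Fintype.sum_prod_type, sum_apply]

lemma conjTranspose_fromColBlocks_mul_apply [Fintype m] (W : ι → Matrix m k α)
    (x y : ι × k) :
    ((fromColBlocks W)ᴴ * fromColBlocks W) x y = ((W x.1)ᴴ * W y.1) x.2 y.2 := by
  simp [fromColBlocks, mul_apply]

end FromColBlocks

lemma sqrt_smul_mul_sqrt_smul {𝕜 l m n : Type*} [RCLike 𝕜] [Fintype m] {r : ℝ} (hr : 0 ≤ r)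
    (M : Matrix l m 𝕜) (N : Matrix m n 𝕜) :
    (√r • M) * (√r • N) = r • (M * N) := by
  rw [Matrix.smul_mul, Matrix.mul_smul, smul_smul, Real.mul_self_sqrt hr]

variable {𝕜 : Type*} [RCLike 𝕜] {m n : Type*} [Fintype m] [Fintype n]
  [DecidableEq m] [DecidableEq n]

open Polynomial in
lemma IsHermitian.sum_comp_eigenvalues_mul_comm {f : ℝ → ℝ} (hf : f 0 = 0)
    {A : Matrix m n 𝕜} {B : Matrix n m 𝕜} (hAB : (A * B).IsHermitian)
    (hBA : (B * A).IsHermitian) :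
    ∑ i, f (hAB.eigenvalues i) = ∑ j, f (hBA.eigenvalues j) := by
  have hroots := congrArg roots (charpoly_mul_comm' A B)
  rw [roots_mul ((monic_X_pow _).mul (charpoly_monic _)).ne_zero,
    roots_mul ((monic_X_pow _).mul (charpoly_monic _)).ne_zero, roots_X_pow, roots_X_pow,
    hAB.roots_charpoly_eq_eigenvalues, hBA.roots_charpoly_eq_eigenvalues] at hroots
  simpa [hf, Function.comp_def, Multiset.map_nsmul, Multiset.sum_nsmul] using
    congrArg (fun s : Multiset 𝕜 => (s.map fun z => f (RCLike.re z)).sum) hroots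

lemma sum_norm_sq_row_eq_one_of_mem_unitaryGroup {U : Matrix n n 𝕜}
    (hU : U ∈ unitaryGroup n 𝕜) (i : n) : ∑ k, ‖U i k‖ ^ 2 = 1 := by
  have h := congrFun (congrFun (mem_unitaryGroup_iff.mp hU) i) i
  simp only [mul_apply, star_apply, RCLike.star_def, RCLike.mul_conj, one_apply_eq] at h
  exact_mod_cast h

lemma sum_norm_sq_col_eq_one_of_mem_unitaryGroup {U : Matrix n n 𝕜}
    (hU : U ∈ unitaryGroup n 𝕜) (k : n) : ∑ i, ‖U i k‖ ^ 2 = 1 := by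
  simpa using sum_norm_sq_row_eq_one_of_mem_unitaryGroup (Unitary.star_mem hU) k

lemma IsHermitian.apply_self_eq_sum_eigenvalues {A : Matrix n n 𝕜} (hA : A.IsHermitian)
    (i : n) :
    A i i = ∑ k, (‖(hA.eigenvectorUnitary : Matrix n n 𝕜) i k‖ ^ 2 * hA.eigenvalues k : ℝ) := by
  conv_lhs => rw [hA.spectral_theorem, Unitary.conjStarAlgAut_apply]
  rw [mul_apply]
  push_cast
  refine Finset.sum_congr rfl fun k _ => ?_
  rw [mul_diagonal, star_apply, ← RCLike.mul_conj, RCLike.star_def, Function.comp_apply]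
  ring

lemma IsHermitian.sum_comp_eigenvalues_le_sum_comp_diag {f : ℝ → ℝ} {s : Set ℝ}
    (hf : ConcaveOn ℝ s f) {A : Matrix n n 𝕜} (hA : A.IsHermitian)
    (hs : ∀ i, hA.eigenvalues i ∈ s) :
    ∑ i, f (hA.eigenvalues i) ≤ ∑ i, f (RCLike.re (A i i)) := by
  set U := hA.eigenvectorUnitary
  calc ∑ k, f (hA.eigenvalues k)
      = ∑ k, (∑ i, ‖(U : Matrix n n 𝕜) i k‖ ^ 2) * f (hA.eigenvalues k) := by
        simp only [sum_norm_sq_col_eq_one_of_mem_unitaryGroup U.2, one_mul]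
    _ = ∑ i, ∑ k, ‖(U : Matrix n n 𝕜) i k‖ ^ 2 • f (hA.eigenvalues k) := by
        simp only [Finset.sum_mul, smul_eq_mul]
        exact Finset.sum_comm
    _ ≤ ∑ i, f (∑ k, ‖(U : Matrix n n 𝕜) i k‖ ^ 2 • hA.eigenvalues k) :=
        Finset.sum_le_sum fun i _ => hf.le_map_sum (fun _ _ => by positivity)
          (sum_norm_sq_row_eq_one_of_mem_unitaryGroup U.2 i) fun k _ => hs k
    _ = ∑ i, f (RCLike.re (A i i)) := by
        simp only [hA.apply_self_eq_sum_eigenvalues, RCLike.ofReal_re, smul_eq_mul, U]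

lemma PosSemidef.exists_mul_conjTranspose_eq {A : Matrix n n 𝕜} (hA : A.PosSemidef) :
    ∃ W : Matrix n n 𝕜, W * Wᴴ = A ∧ Wᴴ * W = diagonal fun j => (hA.1.eigenvalues j : 𝕜) := by
  set U : Matrix n n 𝕜 := (hA.1.eigenvectorUnitary : Matrix n n 𝕜)
  set D : Matrix n n 𝕜 := diagonal fun j => (√(hA.1.eigenvalues j) : 𝕜)
  have hD : Dᴴ = D := by simp [D, diagonal_conjTranspose, Pi.star_def]
  have hDD : D * D = diagonal (RCLike.ofReal ∘ hA.1.eigenvalues) := by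
    simp only [D, diagonal_mul_diagonal, ← RCLike.ofReal_mul,
      Real.mul_self_sqrt (hA.eigenvalues_nonneg _), Function.comp_def]
  refine ⟨U * D, ?_, ?_⟩
  · conv_rhs => rw [hA.1.spectral_theorem, Unitary.conjStarAlgAut_apply, ← hDD]
    simp only [conjTranspose_mul, hD, star_eq_conjTranspose, Matrix.mul_assoc, U]
  · rw [conjTranspose_mul, hD, Matrix.mul_assoc, ← Matrix.mul_assoc _ U,
      ← star_eq_conjTranspose, Unitary.coe_star_mul_self, Matrix.one_mul, hDD]
    rfl

end Matrix

theorem vnEntropy_mixture_le_general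
    {d : ℕ} {F : Type*} [Fintype F]
    (p : F → ℝ) (hp0 : ∀ n, 0 ≤ p n)
    (ρ : F → Matrix (Fin d) (Fin d) ℂ)
    (hρ : ∀ n, (ρ n).PosSemidef) (hρtr : ∀ n, (ρ n).trace = 1) :
    vnEntropy (∑ n, p n • ρ n) ≤ shannonEntropy p + ∑ n, p n * vnEntropy (ρ n) := by
  set μ : F → Fin d → ℝ := fun n => (hρ n).1.eigenvalues
  choose W hWW hWdiag using fun n => (hρ n).exists_mul_conjTranspose_eq
  set V := fromColBlocks fun n => √(p n) • W n
  have hV : V * Vᴴ = ∑ n, p n • ρ n := by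
    simp only [V, fromColBlocks_mul_conjTranspose, conjTranspose_smul, star_trivial,
      sqrt_smul_mul_sqrt_smul (hp0 _), hWW]
  have hdiag : ∀ x, RCLike.re ((Vᴴ * V) x x) = p x.1 * μ x.1 x.2 := fun x => by
    simp [V, conjTranspose_fromColBlocks_mul_apply, conjTranspose_smul,
      sqrt_smul_mul_sqrt_smul (hp0 _), hWdiag, μ]
  have htr : ∀ n, ∑ j, μ n j = 1 := fun n => Complex.ofReal_injective <| by
    simpa [μ] using (hρ n).1.trace_eq_sum_eigenvalues.symm.trans (hρtr n)
  have hmix := posSemidef_self_mul_conjTranspose V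
  have hgram := posSemidef_conjTranspose_mul_self V
  calc vnEntropy (∑ n, p n • ρ n)
      = shannonEntropy hgram.1.eigenvalues := by
        rw [← hV, vnEntropy_eq_shannonEntropy hmix.1]
        exact IsHermitian.sum_comp_eigenvalues_mul_comm Real.negMulLog_zero _ _
    _ ≤ shannonEntropy fun x : F × Fin d => p x.1 * μ x.1 x.2 := by
        simpa only [shannonEntropy, hdiag] using hgram.1.sum_comp_eigenvalues_le_sum_comp_diag
          Real.concaveOn_negMulLog hgram.eigenvalues_nonneg
    _ = shannonEntropy p + ∑ n, p n * vnEntropy (ρ n) := by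
        simp only [shannonEntropy_joint_eq_add p μ htr, vnEntropy_eq_shannonEntropy (hρ _).1, μ]

/-- The von Neumann entropy of a mixture is at most the Shannon entropy of the
mixing distribution plus the average entropy of the components. -/
theorem vnEntropy_mixture_le
    {d : ℕ} {F : Type*} [Fintype F]
    (p : F → ℝ) (hp0 : ∀ n, 0 ≤ p n) (hp1 : ∑ n, p n = 1)
    (ρ : F → Matrix (Fin d) (Fin d) ℂ)
    (hρ : ∀ n, (ρ n).PosSemidef) (hρtr : ∀ n, (ρ n).trace = 1) :
    vnEntropy (∑ n, p n • ρ n) ≤ shannonEntropy p + ∑ n, p n * vnEntropy (ρ n) :=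
  vnEntropy_mixture_le_general p hp0 ρ hρ hρtr
end

section
/- Let H₀ and H₁ be Hermitian d×d matrices with orthonormal eigenbases {v_i}_{i=1}^d and {w_j}_{j=1}^d and corresponding real eigenvalues {ε⁰_i} and {ε¹_j}, let U be a d×d unitary matrix, and let β ∈ ℝ. Define the partition functions Z₀ = ∑_i e^{−βε⁰_i} and Z₁ = ∑_j e^{−βε¹_j}, and the two-point measurement probabilities p(i,j) = |⟨w_j, U v_i⟩|² e^{−βε⁰_i}/Z₀. Then the quantum Jarzynski equality holds: ∑_{i,j} p(i,j) e^{−β(ε¹_j − ε⁰_i)} = Z₁/Z₀. -/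
open Matrix
open scoped BigOperators Classical ComplexOrder

lemma jarzynski_key
    {d : ℕ}
    (v w : Fin d → (Fin d → ℂ))
    (hv_on : ∀ i j, star (v i) ⬝ᵥ v j = if i = j then 1 else 0)
    (hw_on : ∀ i j, star (w i) ⬝ᵥ w j = if i = j then 1 else 0)
    (U : Matrix (Fin d) (Fin d) ℂ) (hU' : U * Uᴴ = 1)
    (j : Fin d) :
    ∑ i, ‖star (w j) ⬝ᵥ (U *ᵥ v i)‖ ^ 2 = 1 := by
  classical
  set V : Matrix (Fin d) (Fin d) ℂ := Matrix.of (fun k i => v i k) with hV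
  have hVV : Vᴴ * V = 1 := by
    ext i k
    simpa [Matrix.mul_apply, Matrix.conjTranspose_apply, hV, Matrix.one_apply,
      dotProduct, Pi.star_apply] using hv_on i k
  have hVV' : V * Vᴴ = 1 := mul_eq_one_comm.mp hVV
  have hMM : (U * V) * (U * V)ᴴ = 1 := by
    rw [Matrix.conjTranspose_mul]
    rw [Matrix.mul_assoc, ← Matrix.mul_assoc V, hVV', Matrix.one_mul, hU']
  have hMMe : ∀ k l, (∑ i, (U * V) k i * (starRingEnd ℂ) ((U * V) l i))
      = if k = l then 1 else 0 := by
    intro k l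
    have := congrFun (congrFun hMM k) l
    simpa [Matrix.mul_apply, Matrix.conjTranspose_apply, Matrix.one_apply, mul_comm] using this
  set M := U * V with hM
  have ha : ∀ i, star (w j) ⬝ᵥ (U *ᵥ v i) = ∑ k, (starRingEnd ℂ) (w j k) * M k i := by
    intro i
    simp [dotProduct, Matrix.mulVec, hM, hV, Matrix.mul_apply, Pi.star_apply]
  have hC : (∑ i, ((starRingEnd ℂ) (star (w j) ⬝ᵥ (U *ᵥ v i))) * (star (w j) ⬝ᵥ (U *ᵥ v i)))
      = 1 := by
    calc ∑ i, ((starRingEnd ℂ) (star (w j) ⬝ᵥ (U *ᵥ v i))) * (star (w j) ⬝ᵥ (U *ᵥ v i))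
        = ∑ i, (∑ k, w j k * (starRingEnd ℂ) (M k i)) * (∑ l, (starRingEnd ℂ) (w j l) * M l i) := by
          simp [ha, map_sum, mul_comm]
      _ = ∑ i, ∑ k, ∑ l, w j k * (starRingEnd ℂ) (w j l) * (M l i * (starRingEnd ℂ) (M k i)) := by
          refine Finset.sum_congr rfl fun i _ => ?_
          rw [Finset.sum_mul_sum]
          refine Finset.sum_congr rfl fun k _ => Finset.sum_congr rfl fun l _ => ?_
          ring
      _ = ∑ k, ∑ l, ∑ i, w j k * (starRingEnd ℂ) (w j l) * (M l i * (starRingEnd ℂ) (M k i)) := by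
          rw [Finset.sum_comm]
          exact Finset.sum_congr rfl fun k _ => Finset.sum_comm ..
      _ = ∑ k, ∑ l, w j k * (starRingEnd ℂ) (w j l) * (∑ i, M l i * (starRingEnd ℂ) (M k i)) := by
          simp_rw [← Finset.mul_sum]
      _ = ∑ k, w j k * (starRingEnd ℂ) (w j k) := by
          simp [hMMe]
      _ = 1 := by
          have h := hw_on j j
          simp only [if_pos] at h
          rw [← h]
          simp [dotProduct, Pi.star_apply, mul_comm]
  have : ((∑ i, (‖star (w j) ⬝ᵥ (U *ᵥ v i)‖ ^ 2 : ℝ) : ℝ) : ℂ) = 1 := by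
    rw [← hC]
    push_cast
    refine Finset.sum_congr rfl fun i _ => ?_
    rw [Complex.conj_mul']
  exact_mod_cast this

/-- The quantum Jarzynski equality for the two-point measurement scheme:
`⟨e^{−β(ε¹_j − ε⁰_i)}⟩ = Z₁/Z₀`. -/
theorem quantum_jarzynski_equality
    {d : ℕ}
    (H₀ H₁ : Matrix (Fin d) (Fin d) ℂ) (hH₀ : H₀.IsHermitian) (hH₁ : H₁.IsHermitian)
    (v w : Fin d → (Fin d → ℂ)) (ε₀ ε₁ : Fin d → ℝ)
    (hv_on : ∀ i j, star (v i) ⬝ᵥ v j = if i = j then 1 else 0)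
    (hw_on : ∀ i j, star (w i) ⬝ᵥ w j = if i = j then 1 else 0)
    (hv_eig : ∀ i, H₀ *ᵥ v i = (ε₀ i : ℂ) • v i)
    (hw_eig : ∀ j, H₁ *ᵥ w j = (ε₁ j : ℂ) • w j)
    (U : Matrix (Fin d) (Fin d) ℂ) (hU : Uᴴ * U = 1) (hU' : U * Uᴴ = 1)
    (β : ℝ)
    (Z₀ Z₁ : ℝ) (hZ₀ : Z₀ = ∑ i, Real.exp (-β * ε₀ i)) (hZ₁ : Z₁ = ∑ j, Real.exp (-β * ε₁ j))
    (p : Fin d → Fin d → ℝ)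
    (hp : ∀ i j, p i j = ‖star (w j) ⬝ᵥ (U *ᵥ v i)‖ ^ 2 * Real.exp (-β * ε₀ i) / Z₀) :
    ∑ i, ∑ j, p i j * Real.exp (-β * (ε₁ j - ε₀ i)) = Z₁ / Z₀ := by
  have hterm : ∀ i j, p i j * Real.exp (-β * (ε₁ j - ε₀ i))
      = ‖star (w j) ⬝ᵥ (U *ᵥ v i)‖ ^ 2 * (Real.exp (-β * ε₁ j) / Z₀) := by
    intro i j
    have harg : -β * ε₀ i + -β * (ε₁ j - ε₀ i) = -β * ε₁ j := by ring
    rw [hp, div_mul_eq_mul_div, mul_assoc, ← Real.exp_add, harg, mul_div_assoc]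
  calc ∑ i, ∑ j, p i j * Real.exp (-β * (ε₁ j - ε₀ i))
      = ∑ j, ∑ i, ‖star (w j) ⬝ᵥ (U *ᵥ v i)‖ ^ 2 * (Real.exp (-β * ε₁ j) / Z₀) := by
        simp_rw [hterm]; exact Finset.sum_comm ..
    _ = ∑ j, (∑ i, ‖star (w j) ⬝ᵥ (U *ᵥ v i)‖ ^ 2) * (Real.exp (-β * ε₁ j) / Z₀) := by
        simp_rw [Finset.sum_mul]
    _ = ∑ j, Real.exp (-β * ε₁ j) / Z₀ := by
        refine Finset.sum_congr rfl fun j _ => ?_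
        rw [jarzynski_key v w hv_on hw_on U hU' j, one_mul]
    _ = Z₁ / Z₀ := by rw [hZ₁, Finset.sum_div]
end

section
/- Let H : {1,…,d} → ℝ be an energy function, β ∈ ℝ, and π the Gibbs distribution π_s = e^{−βH(s)}/Z with Z = ∑_s e^{−βH(s)}. Let T be a d×d column-stochastic matrix (T_{s,s'} ≥ 0 and ∑_s T_{s,s'} = 1 for each s') satisfying Tπ = π. Then for every probability vector q on {1,…,d}, the classical entropy production is nonnegative: H(Tq) − H(q) − β ∑_s H(s)[(Tq)_s − q_s] ≥ 0. -/
open Matrix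
open scoped BigOperators Classical

/-!
Against the Gibbs state `π`, relative entropy is free energy up to constants:
`D(p‖π) = -S(p) + β ∑ H p + log Z ∑ p`, with `S` the Shannon entropy. As `T` preserves total
mass, the `log Z` terms cancel and the entropy production equals `D(q‖π) - D(Tq‖Tπ)`, which is
nonnegative by the data processing inequality. Row by row, that inequality is the log-sum
inequality, i.e. Jensen's inequality for the convex function `x ↦ x log x`.
-/

section RelativeEntropy

open Finset Real

lemma mul_div_mul_log_div {p r : ℝ} (hr : r ≠ 0) :
    r * (p / r * log (p / r)) = p * log (p / r) := by
  rw [← mul_assoc, mul_div_cancel₀ _ hr]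

lemma mul_log_div_sum_le_sum_mul_log_div {κ : Type*} [Fintype κ] {w x y : κ → ℝ}
    (hw : ∀ j, 0 ≤ w j) (hx : ∀ j, 0 ≤ x j) (hy : ∀ j, 0 < y j) :
    (∑ j, w j * x j) * log ((∑ j, w j * x j) / ∑ j, w j * y j) ≤
      ∑ j, w j * (x j * log (x j / y j)) := by
  set W := ∑ j, w j * y j
  have hwy : ∀ j, 0 ≤ w j * y j := fun j => mul_nonneg (hw j) (hy j).le
  rcases (sum_nonneg fun j _ => hwy j : 0 ≤ W).eq_or_lt with hW | hW
  · have hwy0 := (sum_eq_zero_iff_of_nonneg fun j _ => hwy j).1 hW.symm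
    have hw0 : ∀ j, w j = 0 := fun j =>
      (mul_eq_zero.1 (hwy0 j (mem_univ j))).resolve_right (hy j).ne'
    simp [hw0]
  · have jensen := convexOn_mul_log.map_sum_le (t := univ) (w := fun j => w j * y j / W)
      (p := fun j => x j / y j) (fun j _ => div_nonneg (hwy j) hW.le)
      (by rw [← sum_div, div_self hW.ne'])
      (fun j _ => Set.mem_Ici.2 (div_nonneg (hx j) (hy j).le))
    have hmean : ∑ j, (w j * y j / W) • (x j / y j) = (∑ j, w j * x j) / W := by
      rw [sum_div]
      refine sum_congr rfl fun j _ => ?_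
      rw [smul_eq_mul]
      field_simp [(hy j).ne']
    rw [hmean] at jensen
    calc (∑ j, w j * x j) * log ((∑ j, w j * x j) / W)
        = W * ((∑ j, w j * x j) / W * log ((∑ j, w j * x j) / W)) :=
          (mul_div_mul_log_div hW.ne').symm
      _ ≤ W * ∑ j, (w j * y j / W) • (x j / y j * log (x j / y j)) :=
          mul_le_mul_of_nonneg_left jensen hW.le
      _ = ∑ j, w j * (x j * log (x j / y j)) := by
          rw [mul_sum]
          refine sum_congr rfl fun j _ => ?_
          rw [smul_eq_mul, ← mul_assoc, mul_div_cancel₀ _ hW.ne', mul_assoc,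
            mul_div_mul_log_div (hy j).ne']

variable {ι : Type*} [Fintype ι]

noncomputable def relEntropy (p r : ι → ℝ) : ℝ :=
  ∑ s, p s * log (p s / r s)

lemma relEntropy_eq_neg_shannonEntropy_sub {p r : ι → ℝ} (hr : ∀ s, r s ≠ 0) :
    relEntropy p r = -shannonEntropy p - ∑ s, p s * log (r s) := by
  rw [relEntropy, shannonEntropy, neg_eq_neg_one_mul, mul_sum, ← sum_sub_distrib]
  refine sum_congr rfl fun s _ => ?_
  rcases eq_or_ne (p s) 0 with hp | hp
  · simp [hp]
  · rw [log_div hp (hr s), negMulLog]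
    ring

theorem relEntropy_mulVec_le [DecidableEq ι] {T : Matrix ι ι ℝ}
    (hT : T ∈ colStochastic ℝ ι) {p r : ι → ℝ} (hp : ∀ s, 0 ≤ p s)
    (hr : ∀ s, 0 < r s) :
    relEntropy (T *ᵥ p) (T *ᵥ r) ≤ relEntropy p r :=
  calc relEntropy (T *ᵥ p) (T *ᵥ r)
      ≤ ∑ i, ∑ j, T i j * (p j * log (p j / r j)) :=
        sum_le_sum fun i _ => mul_log_div_sum_le_sum_mul_log_div
          (fun j => nonneg_of_mem_colStochastic hT) hp hr
    _ = relEntropy p r := by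
        rw [sum_comm, relEntropy]
        simp only [← sum_mul, sum_col_of_mem_colStochastic hT, one_mul]

end RelativeEntropy

section Gibbs

open Finset

variable {ι : Type*} [Fintype ι] {H : ι → ℝ} {β Z : ℝ} {π : ι → ℝ}

lemma partitionFunction_pos [Nonempty ι] (hZ : Z = ∑ s, Real.exp (-β * H s)) : 0 < Z :=
  hZ ▸ sum_pos (fun _ _ => Real.exp_pos _) univ_nonempty

lemma gibbs_pos (hZ : Z = ∑ s, Real.exp (-β * H s))
    (hπ : ∀ s, π s = Real.exp (-β * H s) / Z) (s : ι) :
    0 < π s :=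
  have : Nonempty ι := ⟨s⟩
  hπ s ▸ div_pos (Real.exp_pos _) (partitionFunction_pos hZ)

lemma log_gibbs (hZ : Z = ∑ s, Real.exp (-β * H s))
    (hπ : ∀ s, π s = Real.exp (-β * H s) / Z) (s : ι) :
    Real.log (π s) = -β * H s - Real.log Z := by
  have : Nonempty ι := ⟨s⟩
  rw [hπ, Real.log_div (Real.exp_ne_zero _) (partitionFunction_pos hZ).ne', Real.log_exp]

lemma relEntropy_gibbs (hZ : Z = ∑ s, Real.exp (-β * H s))
    (hπ : ∀ s, π s = Real.exp (-β * H s) / Z)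
    (p : ι → ℝ) :
    relEntropy p π = -shannonEntropy p + β * ∑ s, H s * p s + Real.log Z * ∑ s, p s := by
  rw [relEntropy_eq_neg_shannonEntropy_sub fun s => (gibbs_pos hZ hπ s).ne']
  simp only [log_gibbs hZ hπ, mul_sum, ← sum_neg_distrib, sub_eq_add_neg (-shannonEntropy p),
    add_assoc, ← sum_add_distrib]
  congr 1
  refine sum_congr rfl fun s _ => ?_
  ring

end Gibbs

theorem classical_entropy_production_nonneg_general
    {d : ℕ}
    (H : Fin d → ℝ) (β : ℝ)
    (Z : ℝ) (hZ : Z = ∑ s, Real.exp (-β * H s))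
    (π : Fin d → ℝ) (hπ : ∀ s, π s = Real.exp (-β * H s) / Z)
    (T : Matrix (Fin d) (Fin d) ℝ)
    (hT0 : ∀ s s', 0 ≤ T s s') (hT1 : ∀ s', ∑ s, T s s' = 1)
    (hTπ : T *ᵥ π = π)
    (q : Fin d → ℝ) (hq0 : ∀ s, 0 ≤ q s) :
    0 ≤ shannonEntropy (T *ᵥ q) - shannonEntropy q -
        β * ∑ s, H s * ((T *ᵥ q) s - q s) := by
  have hT : T ∈ colStochastic ℝ (Fin d) := mem_colStochastic_iff_sum.2 ⟨hT0, hT1⟩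
  have hmono := relEntropy_mulVec_le hT hq0 (gibbs_pos hZ hπ)
  rw [hTπ, relEntropy_gibbs hZ hπ, relEntropy_gibbs hZ hπ,
    sum_mulVec_of_mem_colStochastic hT] at hmono
  simp only [mul_sub, Finset.sum_sub_distrib]
  linarith

/-- Classical second law: nonnegativity of the entropy production for a
column-stochastic matrix preserving the Gibbs distribution. -/
theorem classical_entropy_production_nonneg
    {d : ℕ}
    (H : Fin d → ℝ) (β : ℝ)
    (Z : ℝ) (hZ : Z = ∑ s, Real.exp (-β * H s))
    (π : Fin d → ℝ) (hπ : ∀ s, π s = Real.exp (-β * H s) / Z)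
    (T : Matrix (Fin d) (Fin d) ℝ)
    (hT0 : ∀ s s', 0 ≤ T s s') (hT1 : ∀ s', ∑ s, T s s' = 1)
    (hTπ : T *ᵥ π = π)
    (q : Fin d → ℝ) (hq0 : ∀ s, 0 ≤ q s) (hq1 : ∑ s, q s = 1) :
    0 ≤ shannonEntropy (T *ᵥ q) - shannonEntropy q -
        β * ∑ s, H s * ((T *ᵥ q) s - q s) :=
  classical_entropy_production_nonneg_general H β Z hZ π hπ T hT0 hT1 hTπ q hq0
end

section
/- Let ρ_S be a density matrix on ℂ^{d_S}, ρ_U a density matrix on ℂ^{d_U}, V a unitary on ℂ^{d_S} ⊗ ℂ^{d_U}, and σ = V (ρ_S ⊗ ρ_U) V†. Let Φ(X) = ∑_k K_k X K_k† be a quantum channel in Kraus form on d_S×d_S matrices with ∑_k K_k† K_k = 1, let β ≥ 0 and Q ∈ ℝ, and suppose the marginal second law S(Φ(tr_U σ)) − S(tr_U σ) − βQ ≥ 0 holds. Then the generalized second law of the repeated interaction framework holds: [S(Φ(tr_U σ)) − S(ρ_S)] + [S(tr_S σ) − S(ρ_U)] − βQ ≥ I(S:U)(σ) ≥ 0, i.e.,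 the total change of the system and unit marginal entropies minus the entropy flow is bounded below by the system–unit mutual information built up by the interaction. -/
open Matrix
open scoped BigOperators Classical ComplexOrder Kronecker

/-- Partial trace over the second (unit) factor. -/
noncomputable def ptraceU {dS dU : ℕ}
    (ρ : Matrix (Fin dS × Fin dU) (Fin dS × Fin dU) ℂ) : Matrix (Fin dS) (Fin dS) ℂ :=
  fun s s' => ∑ u, ρ (s, u) (s', u)

/-- Partial trace over the first (system) factor. -/
noncomputable def ptraceS {dS dU : ℕ}
    (ρ : Matrix (Fin dS × Fin dU) (Fin dS × Fin dU) ℂ) : Matrix (Fin dU) (Fin dU) ℂ :=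
  fun u u' => ∑ s, ρ (s, u) (s, u')

/-- Quantum mutual information `I(S:U) = S(ρ_S) + S(ρ_U) − S(ρ_SU)` of a bipartite state. -/
noncomputable def mutualInfo {dS dU : ℕ}
    (ρ : Matrix (Fin dS × Fin dU) (Fin dS × Fin dU) ℂ) : ℝ :=
  vnEntropy (ptraceU ρ) + vnEntropy (ptraceS ρ) - vnEntropy ρ

/-!
Unitary conjugation preserves the characteristic polynomial, hence the spectrum, and the spectrum
of `ρ_S ⊗ ρ_U` consists of the products of the eigenvalues of the factors; so
`S(σ) = S(ρ_S) + S(ρ_U)`, and the first inequality is the marginal second law rearranged.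
Nonnegativity of `I(S:U)` is subadditivity of the von Neumann entropy. Written in the product of
the eigenbases of its two marginals, `σ` has entropy at most the Shannon entropy of its diagonal,
because the squared moduli of a unitary form a doubly stochastic matrix and `negMulLog` is
concave; the two marginals of that diagonal are the spectra of `tr_U σ` and `tr_S σ`, and
classical subadditivity (Gibbs' inequality) finishes.
-/

open Polynomial Real

theorem negMulLog_le_of_le_of_le {q a b : ℝ} (hq : 0 ≤ q) (ha : q ≤ a) (hb : q ≤ b) :
    negMulLog q ≤ q * -log a + q * -log b + (a * b - q) := by
  rcases hq.eq_or_lt with rfl | hq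
  · simpa using mul_nonneg ha hb
  have ha' : 0 < a := hq.trans_le ha
  have hb' : 0 < b := hq.trans_le hb
  -- Gibbs: `log (ab/q) ≤ ab/q - 1`, multiplied by `q`
  have hgibbs := mul_le_mul_of_nonneg_left
    (log_le_sub_one_of_pos (show 0 < a * b / q by positivity)) hq.le
  rw [log_div (by positivity) hq.ne', log_mul ha'.ne' hb'.ne', mul_sub _ (a * b / q),
    mul_div_cancel₀ _ hq.ne'] at hgibbs
  rw [negMulLog]
  linarith

theorem sum_negMulLog_le_add_marginals {n m : Type*} [Fintype n] [Fintype m] {q : n × m → ℝ}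
    (hq : ∀ x, 0 ≤ q x) (hsum : ∑ x, q x = 1) :
    ∑ x, negMulLog (q x)
      ≤ ∑ i, negMulLog (∑ j, q (i, j)) + ∑ j, negMulLog (∑ i, q (i, j)) := by
  set p : n → ℝ := fun i => ∑ j, q (i, j)
  set r : m → ℝ := fun j => ∑ i, q (i, j)
  have hp : ∑ i, p i = 1 := by rw [← hsum, Fintype.sum_prod_type]
  have hr : ∑ j, r j = 1 := by rw [← hsum, Fintype.sum_prod_type_right]
  calc ∑ x, negMulLog (q x)
      ≤ ∑ x : n × m, (q x * -log (p x.1) + q x * -log (r x.2) + (p x.1 * r x.2 - q x)) :=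
        Finset.sum_le_sum fun x _ => negMulLog_le_of_le_of_le (hq x)
          (Finset.single_le_sum (fun j _ => hq (x.1, j)) (Finset.mem_univ x.2))
          (Finset.single_le_sum (fun i _ => hq (i, x.2)) (Finset.mem_univ x.1))
    _ = ∑ i, negMulLog (p i) + ∑ j, negMulLog (r j) + ((∑ i, p i) * (∑ j, r j) - ∑ x, q x) := by
        simp only [Finset.sum_add_distrib, Finset.sum_sub_distrib, Finset.sum_mul_sum,
          negMulLog, neg_mul, mul_neg]
        rw [Fintype.sum_prod_type, Fintype.sum_prod_type_right, Fintype.sum_prod_type]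
        simp [p, r, Finset.sum_mul]
    _ = _ := by rw [hp, hr, hsum]; ring

section Entropy

variable {n m : Type*} [Fintype n] [DecidableEq n] [Fintype m]

theorem sum_negMulLog_le_sum_negMulLog_mulVec_s13 {B : Matrix n n ℝ}
    (hB : B ∈ doublyStochastic ℝ n) {p : n → ℝ} (hp : ∀ i, 0 ≤ p i) :
    ∑ i, negMulLog (p i) ≤ ∑ j, negMulLog ((B *ᵥ p) j) :=
  calc ∑ i, negMulLog (p i) = ∑ j, ∑ i, B j i * negMulLog (p i) := by
        rw [Finset.sum_comm]
        simp only [← Finset.sum_mul, sum_col_of_mem_doublyStochastic hB, one_mul]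
    _ ≤ ∑ j, negMulLog ((B *ᵥ p) j) := Finset.sum_le_sum fun j _ => by
        simpa [mulVec, dotProduct] using concaveOn_negMulLog.le_map_sum
          (fun i _ => nonneg_of_mem_doublyStochastic hB) (sum_row_of_mem_doublyStochastic hB j)
          (fun i _ => Set.mem_Ici.2 (hp i))

theorem map_normSq_mem_doublyStochastic {U : Matrix n n ℂ} (hU : U ∈ unitary (Matrix n n ℂ)) :
    U.map Complex.normSq ∈ doublyStochastic ℝ n := by
  obtain ⟨hcols, hrows⟩ : Uᴴ * U = 1 ∧ U * Uᴴ = 1 := Unitary.mem_iff.1 hU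
  refine mem_doublyStochastic_iff_sum.2
    ⟨fun i j => Complex.normSq_nonneg _, fun i => ?_, fun j => ?_⟩
  · have h := congr_fun (congr_fun hrows i) i
    simp only [mul_apply, conjTranspose_apply, one_apply_eq, RCLike.star_def,
      Complex.mul_conj] at h
    simpa only [map_apply] using (by exact_mod_cast h : ∑ j, Complex.normSq (U i j) = 1)
  · have h := congr_fun (congr_fun hcols j) j
    simp only [mul_apply, conjTranspose_apply, one_apply_eq, RCLike.star_def, mul_comm,
      Complex.mul_conj] at h
    simpa only [map_apply] using (by exact_mod_cast h : ∑ i, Complex.normSq (U i j) = 1)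

theorem mul_diagonal_mul_conjTranspose_apply_self (U : Matrix n n ℂ) (d : n → ℝ) (i : n) :
    (U * diagonal (RCLike.ofReal ∘ d : n → ℂ) * Uᴴ) i i =
      ((U.map Complex.normSq *ᵥ d) i : ℝ) := by
  rw [mul_apply]
  simp only [mul_diagonal, conjTranspose_apply, Function.comp_apply, mulVec,
    dotProduct, map_apply, Complex.ofReal_sum, Complex.ofReal_mul, RCLike.star_def]
  refine Finset.sum_congr rfl fun k _ => ?_
  rw [mul_right_comm, Complex.mul_conj]
  rfl

theorem vnEntropy_eq_sum_eigenvalues {A : Matrix n n ℂ} (hA : A.IsHermitian) :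
    vnEntropy A = ∑ i, negMulLog (hA.eigenvalues i) :=
  dif_pos hA

theorem Matrix.IsHermitian.conjTranspose_eigenvectorUnitary_mul_mul_apply_self
    {A : Matrix n n ℂ} (hA : A.IsHermitian) (i : n) :
    ((hA.eigenvectorUnitary : Matrix n n ℂ)ᴴ * A * hA.eigenvectorUnitary) i i =
      hA.eigenvalues i := by
  have h := hA.conjStarAlgAut_star_eigenvectorUnitary
  rw [Unitary.conjStarAlgAut_star_apply] at h
  rw [← star_eq_conjTranspose, h, diagonal_apply_eq]
  rfl

theorem vnEntropy_le_sum_negMulLog_diag {A : Matrix n n ℂ} (hA : A.PosSemidef) :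
    vnEntropy A ≤ ∑ i, negMulLog (A i i).re := by
  set U : Matrix n n ℂ := (hA.1.eigenvectorUnitary : Matrix n n ℂ)
  have hspec : A = U * diagonal (RCLike.ofReal ∘ hA.1.eigenvalues) * Uᴴ := hA.1.spectral_theorem
  have hdiag : ∀ i, (A i i).re = (U.map Complex.normSq *ᵥ hA.1.eigenvalues) i := fun i => by
    rw [congrArg (fun M : Matrix n n ℂ => M i i) hspec, mul_diagonal_mul_conjTranspose_apply_self,
      Complex.ofReal_re]
  simp only [vnEntropy_eq_sum_eigenvalues hA.1, hdiag]
  exact sum_negMulLog_le_sum_negMulLog_mulVec_s13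
    (map_normSq_mem_doublyStochastic hA.1.eigenvectorUnitary.2) hA.eigenvalues_nonneg

theorem vnEntropy_eq_sum_roots_charpoly {A : Matrix n n ℂ} (hA : A.IsHermitian) :
    vnEntropy A = (A.charpoly.roots.map fun z => negMulLog z.re).sum := by
  rw [vnEntropy_eq_sum_eigenvalues hA, hA.roots_charpoly_eq_eigenvalues, Multiset.map_map,
    Finset.sum_eq_multiset_sum]
  simp [Function.comp_def]

theorem vnEntropy_eq_sum_of_charpoly_eq {A : Matrix n n ℂ} (hA : A.IsHermitian) {d : m → ℝ}
    (h : A.charpoly = ∏ i, (X - C (d i : ℂ))) : vnEntropy A = ∑ i, negMulLog (d i) := by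
  rw [vnEntropy_eq_sum_roots_charpoly hA, h, roots_prod _ _
    (Finset.prod_ne_zero_iff.2 fun i _ => X_sub_C_ne_zero _), Finset.sum_eq_multiset_sum]
  simp

theorem charpoly_mul_mul_conjTranspose {R : Type*} [CommRing R] [Star R] {U : Matrix n n R}
    (hU : Uᴴ * U = 1) (A : Matrix n n R) :
    (U * A * Uᴴ).charpoly = A.charpoly := by
  rw [charpoly_mul_comm, ← mul_assoc, hU, one_mul]

theorem vnEntropy_mul_mul_conjTranspose {A : Matrix n n ℂ} (hA : A.IsHermitian)
    {U : Matrix n n ℂ} (hU : Uᴴ * U = 1) : vnEntropy (U * A * Uᴴ) = vnEntropy A := by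
  rw [vnEntropy_eq_sum_of_charpoly_eq (isHermitian_mul_mul_conjTranspose U hA)
    (d := hA.eigenvalues) ((charpoly_mul_mul_conjTranspose hU A).trans hA.charpoly_eq),
    vnEntropy_eq_sum_eigenvalues hA]

theorem charpoly_kronecker [DecidableEq m] {A : Matrix n n ℂ} {B : Matrix m m ℂ}
    (hA : A.IsHermitian) (hB : B.IsHermitian) :
    (A ⊗ₖ B).charpoly =
      ∏ x : n × m, (X - C ((hA.eigenvalues x.1 * hB.eigenvalues x.2 : ℝ) : ℂ)) := by
  set U : Matrix n n ℂ := (hA.eigenvectorUnitary : Matrix n n ℂ)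
  set W : Matrix m m ℂ := (hB.eigenvectorUnitary : Matrix m m ℂ)
  have hUW : (U ⊗ₖ W)ᴴ * (U ⊗ₖ W) = 1 :=
    Unitary.star_mul_self_of_mem
      (kronecker_mem_unitary hA.eigenvectorUnitary.2 hB.eigenvectorUnitary.2)
  have hspec : A ⊗ₖ B = (U ⊗ₖ W) * diagonal (fun x : n × m =>
      ((hA.eigenvalues x.1 * hB.eigenvalues x.2 : ℝ) : ℂ)) * (U ⊗ₖ W)ᴴ := by
    conv_lhs => rw [hA.spectral_theorem, hB.spectral_theorem]
    simp only [Unitary.conjStarAlgAut_apply, mul_kronecker_mul, diagonal_kronecker_diagonal,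
      conjTranspose_kronecker, star_eq_conjTranspose]
    congr
    ext x
    simp
  rw [hspec, charpoly_mul_mul_conjTranspose hUW, charpoly_diagonal]

theorem vnEntropy_kronecker [DecidableEq m] {A : Matrix n n ℂ} {B : Matrix m m ℂ}
    (hA : A.IsHermitian) (hB : B.IsHermitian) (hAtr : A.trace = 1) (hBtr : B.trace = 1) :
    vnEntropy (A ⊗ₖ B) = vnEntropy A + vnEntropy B := by
  have hAB : (A ⊗ₖ B).IsHermitian := by
    rw [IsHermitian, conjTranspose_kronecker, hA.eq, hB.eq]
  have hsumA : ∑ i, hA.eigenvalues i = 1 := by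
    simpa using congrArg Complex.re (hA.trace_eq_sum_eigenvalues.symm.trans hAtr)
  have hsumB : ∑ j, hB.eigenvalues j = 1 := by
    simpa using congrArg Complex.re (hB.trace_eq_sum_eigenvalues.symm.trans hBtr)
  rw [vnEntropy_eq_sum_of_charpoly_eq hAB (charpoly_kronecker hA hB),
    vnEntropy_eq_sum_eigenvalues hA, vnEntropy_eq_sum_eigenvalues hB, Fintype.sum_prod_type]
  simp only [negMulLog_mul, Finset.sum_add_distrib, ← Finset.sum_mul, ← Finset.mul_sum, hsumB,
    one_mul, hsumA]

end Entropy

section PartialTrace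

variable {dS dU : ℕ}

theorem ptraceU_conjTranspose_kronecker_mul_mul
    (σ : Matrix (Fin dS × Fin dU) (Fin dS × Fin dU) ℂ)
    (P : Matrix (Fin dS) (Fin dS) ℂ) {Q : Matrix (Fin dU) (Fin dU) ℂ} (hQ : Q * Qᴴ = 1) :
    ptraceU ((P ⊗ₖ Q)ᴴ * σ * (P ⊗ₖ Q)) = Pᴴ * ptraceU σ * P := by
  have hQ' : ∀ b b', ∑ u, Q b u * star (Q b' u) = if b = b' then 1 else 0 := fun b b' => by
    simpa [mul_apply, one_apply] using congr_fun (congr_fun hQ b) b'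
  ext s s'
  calc _ = ∑ y, ∑ x, star (P x.1 s) * σ x y * P y.1 s' * ∑ u, Q y.2 u * star (Q x.2 u) := by
          simp only [ptraceU, mul_apply, conjTranspose_apply, kroneckerMap_apply,
            Finset.sum_mul, Finset.mul_sum, star_mul']
          rw [Finset.sum_comm]
          refine Finset.sum_congr rfl fun y _ => ?_
          rw [Finset.sum_comm]
          refine Finset.sum_congr rfl fun x _ => Finset.sum_congr rfl fun u _ => ?_
          ring
    _ = _ := by
          simp only [hQ', mul_ite, mul_one, mul_zero, Fintype.sum_prod_type, Finset.sum_ite_eq,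
            Finset.mem_univ, if_true, ptraceU, mul_apply, conjTranspose_apply, Finset.sum_mul,
            Finset.mul_sum]
          exact Finset.sum_congr rfl fun _ _ => Finset.sum_comm

theorem ptraceS_conjTranspose_kronecker_mul_mul
    (σ : Matrix (Fin dS × Fin dU) (Fin dS × Fin dU) ℂ)
    {P : Matrix (Fin dS) (Fin dS) ℂ} (Q : Matrix (Fin dU) (Fin dU) ℂ) (hP : P * Pᴴ = 1) :
    ptraceS ((P ⊗ₖ Q)ᴴ * σ * (P ⊗ₖ Q)) = Qᴴ * ptraceS σ * Q := by
  have hP' : ∀ a a', ∑ s, P a s * star (P a' s) = if a = a' then 1 else 0 := fun a a' => by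
    simpa [mul_apply, one_apply] using congr_fun (congr_fun hP a) a'
  ext u u'
  calc _ = ∑ y, ∑ x, star (Q x.2 u) * σ x y * Q y.2 u' * ∑ s, P y.1 s * star (P x.1 s) := by
          simp only [ptraceS, mul_apply, conjTranspose_apply, kroneckerMap_apply,
            Finset.sum_mul, Finset.mul_sum, star_mul']
          rw [Finset.sum_comm]
          refine Finset.sum_congr rfl fun y _ => ?_
          rw [Finset.sum_comm]
          refine Finset.sum_congr rfl fun x _ => Finset.sum_congr rfl fun s _ => ?_
          ring
    _ = _ := by
          simp only [hP', mul_ite, mul_one, mul_zero, Fintype.sum_prod_type, Finset.sum_ite_irrel,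
            Finset.sum_const_zero, Finset.sum_ite_eq, Finset.mem_univ, if_true, ptraceS, mul_apply,
            conjTranspose_apply, Finset.sum_mul, Finset.mul_sum]
          conv_lhs => rw [Finset.sum_comm]
          exact Finset.sum_congr rfl fun _ _ => Finset.sum_comm

end PartialTrace

section Subadditivity

variable {dS dU : ℕ} {σ : Matrix (Fin dS × Fin dU) (Fin dS × Fin dU) ℂ}

theorem isHermitian_ptraceU (hσ : σ.IsHermitian) : (ptraceU σ).IsHermitian := by
  ext s s'
  simp only [conjTranspose_apply, ptraceU, star_sum]
  exact Finset.sum_congr rfl fun u _ => hσ.apply _ _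

theorem isHermitian_ptraceS (hσ : σ.IsHermitian) : (ptraceS σ).IsHermitian := by
  ext u u'
  simp only [conjTranspose_apply, ptraceS, star_sum]
  exact Finset.sum_congr rfl fun s _ => hσ.apply _ _

theorem vnEntropy_le_vnEntropy_ptraceU_add_vnEntropy_ptraceS (hσ : σ.PosSemidef)
    (htr : σ.trace = 1) : vnEntropy σ ≤ vnEntropy (ptraceU σ) + vnEntropy (ptraceS σ) := by
  have hA := isHermitian_ptraceU hσ.1
  have hB := isHermitian_ptraceS hσ.1
  set P : Matrix (Fin dS) (Fin dS) ℂ := ↑hA.eigenvectorUnitary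
  set Q : Matrix (Fin dU) (Fin dU) ℂ := ↑hB.eigenvectorUnitary
  obtain ⟨hPQ, hPQ'⟩ : (P ⊗ₖ Q)ᴴ * (P ⊗ₖ Q) = 1 ∧ (P ⊗ₖ Q) * (P ⊗ₖ Q)ᴴ = 1 :=
    Unitary.mem_iff.1 (kronecker_mem_unitary hA.eigenvectorUnitary.2 hB.eigenvectorUnitary.2)
  set τ := (P ⊗ₖ Q)ᴴ * σ * (P ⊗ₖ Q)
  have hτ : τ.PosSemidef := hσ.conjTranspose_mul_mul_same _
  set q : Fin dS × Fin dU → ℝ := fun x => (τ x x).re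
  have hmargU : ∀ s, ∑ u, q (s, u) = hA.eigenvalues s := fun s => by
    have h := congrArg (fun M => (M s s).re)
      (ptraceU_conjTranspose_kronecker_mul_mul σ P
        (Unitary.mul_star_self_of_mem hB.eigenvectorUnitary.2))
    simpa [q, τ, P, Q, ptraceU, hA.conjTranspose_eigenvectorUnitary_mul_mul_apply_self] using h
  have hmargS : ∀ u, ∑ s, q (s, u) = hB.eigenvalues u := fun u => by
    have h := congrArg (fun M => (M u u).re)
      (ptraceS_conjTranspose_kronecker_mul_mul σ Q
        (Unitary.mul_star_self_of_mem hA.eigenvectorUnitary.2))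
    simpa [q, τ, P, Q, ptraceS, hB.conjTranspose_eigenvectorUnitary_mul_mul_apply_self] using h
  have hsum : ∑ x, q x = 1 := by
    have h : τ.trace = 1 := by rw [trace_mul_cycle, hPQ', one_mul, htr]
    simpa [trace] using congrArg Complex.re h
  calc vnEntropy σ = vnEntropy τ := by
        simpa using
          (vnEntropy_mul_mul_conjTranspose hσ.1 (U := (P ⊗ₖ Q)ᴴ) (by simpa using hPQ')).symm
    _ ≤ ∑ x, negMulLog (q x) := vnEntropy_le_sum_negMulLog_diag hτ
    _ ≤ ∑ s, negMulLog (∑ u, q (s, u)) + ∑ u, negMulLog (∑ s, q (s, u)) :=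
        sum_negMulLog_le_add_marginals
          (fun x => by simpa using (Complex.le_def.1 hτ.diag_nonneg).1) hsum
    _ = vnEntropy (ptraceU σ) + vnEntropy (ptraceS σ) := by
        rw [vnEntropy_eq_sum_eigenvalues hA, vnEntropy_eq_sum_eigenvalues hB]
        simp only [hmargU, hmargS]

end Subadditivity

theorem generalized_second_law_repeated_interaction_general
    {dS dU : ℕ} {κ : Type*} [Fintype κ]
    (ρS : Matrix (Fin dS) (Fin dS) ℂ) (hρS : ρS.PosSemidef) (hρStr : ρS.trace = 1)
    (ρU : Matrix (Fin dU) (Fin dU) ℂ) (hρU : ρU.PosSemidef) (hρUtr : ρU.trace = 1)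
    (V : Matrix (Fin dS × Fin dU) (Fin dS × Fin dU) ℂ)
    (hV : Vᴴ * V = 1)
    (σ : Matrix (Fin dS × Fin dU) (Fin dS × Fin dU) ℂ)
    (hσ : σ = V * (ρS ⊗ₖ ρU) * Vᴴ)
    (K : κ → Matrix (Fin dS) (Fin dS) ℂ)
    (β Q : ℝ)
    (hmarg : 0 ≤ vnEntropy (∑ k, K k * ptraceU σ * (K k)ᴴ)
        - vnEntropy (ptraceU σ) - β * Q) :
    mutualInfo σ ≤ (vnEntropy (∑ k, K k * ptraceU σ * (K k)ᴴ) - vnEntropy ρS)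
        + (vnEntropy (ptraceS σ) - vnEntropy ρU) - β * Q
      ∧ 0 ≤ mutualInfo σ := by
  have hprod : (ρS ⊗ₖ ρU).PosSemidef := hρS.kronecker hρU
  have hentropy : vnEntropy σ = vnEntropy ρS + vnEntropy ρU := by
    rw [hσ, vnEntropy_mul_mul_conjTranspose hprod.1 hV,
      vnEntropy_kronecker hρS.1 hρU.1 hρStr hρUtr]
  have hsub : vnEntropy σ ≤ vnEntropy (ptraceU σ) + vnEntropy (ptraceS σ) := by
    refine vnEntropy_le_vnEntropy_ptraceU_add_vnEntropy_ptraceS ?_ ?_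
    · exact hσ ▸ hprod.mul_mul_conjTranspose_same V
    · rw [hσ, trace_mul_cycle, hV, one_mul, trace_kronecker, hρStr, hρUtr, one_mul]
  unfold mutualInfo
  constructor <;> linarith

/-- The generalized second law of the repeated interaction framework: the total change
of the system and unit marginal entropies minus the entropy flow is bounded below by
the system–unit mutual information built up by the unitary interaction. -/
theorem generalized_second_law_repeated_interaction
    {dS dU : ℕ} {κ : Type*} [Fintype κ]
    (ρS : Matrix (Fin dS) (Fin dS) ℂ) (hρS : ρS.PosSemidef) (hρStr : ρS.trace = 1)
    (ρU : Matrix (Fin dU) (Fin dU) ℂ) (hρU : ρU.PosSemidef) (hρUtr : ρU.trace = 1)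
    (V : Matrix (Fin dS × Fin dU) (Fin dS × Fin dU) ℂ)
    (hV : Vᴴ * V = 1) (hV' : V * Vᴴ = 1)
    (σ : Matrix (Fin dS × Fin dU) (Fin dS × Fin dU) ℂ)
    (hσ : σ = V * (ρS ⊗ₖ ρU) * Vᴴ)
    (K : κ → Matrix (Fin dS) (Fin dS) ℂ)
    (hK : ∑ k, (K k)ᴴ * K k = 1)
    (β Q : ℝ) (hβ : 0 ≤ β)
    (hmarg : 0 ≤ vnEntropy (∑ k, K k * ptraceU σ * (K k)ᴴ)
        - vnEntropy (ptraceU σ) - β * Q) :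
    mutualInfo σ ≤ (vnEntropy (∑ k, K k * ptraceU σ * (K k)ᴴ) - vnEntropy ρS)
        + (vnEntropy (ptraceS σ) - vnEntropy ρU) - β * Q
      ∧ 0 ≤ mutualInfo σ :=
  generalized_second_law_repeated_interaction_general ρS hρS hρStr ρU hρU hρUtr V hV σ hσ K β Q
    hmarg
end
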